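/- arXiv:1103.4629 — 2 statements merged into one kernel-verified Lean document; each statement's English description precedes it below -/
import Mathlib

section
/- Let Σ be a signed graph with b(Σ) ≤ n−3. Then λ_max(L(Σ)) ≥ ((2s_3 + 6s_2 − 3s_2s_1 + s_1³ − 3s_1² − 12·t^±(Σ))/((n−b(Σ))(n−b(Σ)−1)(n−b(Σ)−2)))^{1/3}, provided the numerator is interpreted via the absolute-value trace bound. -/
open Matrix BigOperators

noncomputable section

/-- Signed adjacency matrix. -/
def adjMat (n : ℕ) (G : SimpleGraph (Fin n)) [DecidableRel G.Adj]
    (s : Fin n → Fin n → ℝ) : Matrix (Fin n) (Fin n) ℝ :=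
  fun i j => if G.Adj i j then s i j else 0

/-- Laplacian matrix of a signed graph: L = D - A. -/
def lapMat (n : ℕ) (G : SimpleGraph (Fin n)) [DecidableRel G.Adj]
    (s : Fin n → Fin n → ℝ) : Matrix (Fin n) (Fin n) ℝ :=
  Matrix.diagonal (fun i => (G.degree i : ℝ)) - adjMat n G s

/-- Number of negative edges incident to vertex `j`. -/
def dNeg (n : ℕ) (G : SimpleGraph (Fin n)) (s : Fin n → Fin n → ℝ) (j : Fin n) : ℕ :=
  Nat.card {i : Fin n // G.Adj j i ∧ s j i = -1}

/-- Number of positive edges incident to vertex `j`. -/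
def dPos (n : ℕ) (G : SimpleGraph (Fin n)) (s : Fin n → Fin n → ℝ) (j : Fin n) : ℕ :=
  Nat.card {i : Fin n // G.Adj j i ∧ s j i = 1}

/-- Sum of `f i j` over the edges `{v_i, v_j}` of the graph (each unordered edge counted once). -/
def edgeSum (n : ℕ) (G : SimpleGraph (Fin n)) [DecidableRel G.Adj]
    (f : Fin n → Fin n → ℝ) : ℝ :=
  (∑ i, ∑ j, if G.Adj i j then f i j else 0) / 2

/-- `t^±(Σ)`: number of positive triangles minus number of negative triangles. -/
def tPM (n : ℕ) (G : SimpleGraph (Fin n)) [DecidableRel G.Adj]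
    (s : Fin n → Fin n → ℝ) : ℝ :=
  (∑ i, ∑ j, ∑ k, if G.Adj i j ∧ G.Adj j k ∧ G.Adj k i
    then s i j * s j k * s k i else 0) / 6

/-- Number of balanced connected components: components that can be switched all-positive. -/
def numBalanced (n : ℕ) (G : SimpleGraph (Fin n)) (s : Fin n → Fin n → ℝ) : ℕ :=
  Nat.card {c : G.ConnectedComponent //
    ∃ θ : Fin n → ℝ, (∀ v, θ v = 1 ∨ θ v = -1) ∧
      ∀ i j, G.Adj i j → G.connectedComponentMk i = c → s i j = θ i * θ j}

set_option linter.unusedSectionVars false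
set_option maxHeartbeats 1000000

lemma trace_pow_eq {m : Type*} [Fintype m] [DecidableEq m] {A : Matrix m m ℝ}
    (hA : A.IsHermitian) (k : ℕ) : (A ^ k).trace = ∑ i, hA.eigenvalues i ^ k := by
  set U := (hA.eigenvectorUnitary : Matrix m m ℝ) with hUdef
  have hD : Matrix.diagonal (RCLike.ofReal ∘ hA.eigenvalues) = Matrix.diagonal hA.eigenvalues := by
    congr 1
  have hsp : A = U * Matrix.diagonal hA.eigenvalues * star U := by
    rw [← hD]; exact hA.spectral_theorem
  have hUU : star U * U = 1 := Matrix.mem_unitaryGroup_iff'.mp hA.eigenvectorUnitary.2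
  have hUU' : U * star U = 1 := Matrix.mem_unitaryGroup_iff.mp hA.eigenvectorUnitary.2
  have hpow : A ^ k = U * (Matrix.diagonal hA.eigenvalues) ^ k * star U := by
    induction k with
    | zero => simp [hUU']
    | succ k ih =>
      rw [pow_succ, ih, pow_succ]
      calc U * Matrix.diagonal hA.eigenvalues ^ k * star U * A
          = U * Matrix.diagonal hA.eigenvalues ^ k * star U *
            (U * Matrix.diagonal hA.eigenvalues * star U) := by rw [← hsp]
        _ = U * Matrix.diagonal hA.eigenvalues ^ k * (star U * U) *
            Matrix.diagonal hA.eigenvalues * star U := by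
            simp only [Matrix.mul_assoc]
        _ = U * (Matrix.diagonal hA.eigenvalues ^ k * Matrix.diagonal hA.eigenvalues) * star U := by
            rw [hUU]; simp only [Matrix.mul_one, Matrix.mul_assoc]
  rw [hpow, Matrix.trace_mul_cycle, hUU, Matrix.one_mul,
    Matrix.diagonal_pow, Matrix.trace_diagonal]
  simp

variable {m : Type*} [Fintype m] [DecidableEq m]

lemma triple_pt (f : m → ℝ) (i j k : m) :
    (if i ≠ j ∧ j ≠ k ∧ i ≠ k then f i * f j * f k else 0)
    = f i * f j * f k - (if i = j then f i * f j * f k else 0)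
      - (if j = k then f i * f j * f k else 0) - (if i = k then f i * f j * f k else 0)
      + 2 * (if i = j ∧ j = k then f i * f j * f k else 0) := by
  by_cases h1 : i = j <;> by_cases h2 : j = k <;> by_cases h3 : i = k <;> simp_all <;> ring

lemma E2 (f : m → ℝ) :
    ∑ i : m, ∑ j : m, ∑ k : m, (if i = j then f i * f j * f k else 0)
      = (∑ i, f i ^ 2) * (∑ i, f i) := by
  simp only [Finset.sum_ite_irrel, Finset.sum_const_zero, Finset.sum_ite_eq, Finset.mem_univ,
    if_true]
  rw [Finset.sum_mul]
  exact Finset.sum_congr rfl fun i _ => by rw [Finset.mul_sum, sq]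

lemma E3 (f : m → ℝ) :
    ∑ i : m, ∑ j : m, ∑ k : m, (if j = k then f i * f j * f k else 0)
      = (∑ i, f i ^ 2) * (∑ i, f i) := by
  simp only [Finset.sum_ite_irrel, Finset.sum_const_zero, Finset.sum_ite_eq, Finset.mem_univ,
    if_true]
  rw [mul_comm, Finset.sum_mul]
  exact Finset.sum_congr rfl fun i _ => by
    rw [Finset.mul_sum]; exact Finset.sum_congr rfl fun j _ => by ring

lemma E4 (f : m → ℝ) :
    ∑ i : m, ∑ j : m, ∑ k : m, (if i = k then f i * f j * f k else 0)
      = (∑ i, f i ^ 2) * (∑ i, f i) := by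
  simp only [Finset.sum_ite_irrel, Finset.sum_const_zero, Finset.sum_ite_eq, Finset.mem_univ,
    if_true]
  rw [Finset.sum_mul]
  exact Finset.sum_congr rfl fun i _ => by
    rw [Finset.mul_sum]; exact Finset.sum_congr rfl fun j _ => by ring

lemma E5 (f : m → ℝ) :
    ∑ i : m, ∑ j : m, ∑ k : m, (if i = j ∧ j = k then f i * f j * f k else 0)
      = ∑ i, f i ^ 3 := by
  simp only [ite_and, Finset.sum_ite_irrel, Finset.sum_const_zero, Finset.sum_ite_eq,
    Finset.mem_univ, if_true]
  exact Finset.sum_congr rfl fun i _ => by ring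

lemma triple_sum_identity (f : m → ℝ) :
    ∑ i : m, ∑ j : m, ∑ k : m, (if i ≠ j ∧ j ≠ k ∧ i ≠ k then f i * f j * f k else 0)
    = (∑ i, f i) ^ 3 - 3 * (∑ i, f i ^ 2) * (∑ i, f i) + 2 * ∑ i, f i ^ 3 := by
  have hE1 : ∑ i : m, ∑ j : m, ∑ k : m, f i * f j * f k = (∑ i, f i) ^ 3 := by
    simp only [← Finset.sum_mul, ← Finset.mul_sum]; ring
  have h5 : ∑ i : m, ∑ j : m, ∑ k : m,
      2 * (if i = j ∧ j = k then f i * f j * f k else 0) = 2 * ∑ i, f i ^ 3 := by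
    simp only [← Finset.mul_sum]; rw [E5]
  simp only [triple_pt f, Finset.sum_add_distrib, Finset.sum_sub_distrib]
  rw [hE1, E2, E3, E4, h5]
  ring

lemma triple_sum_bound (f : m → ℝ) (hf0 : ∀ i, 0 ≤ f i) (M : ℝ) (hM : ∀ i, f i ≤ M)
    (hM0 : 0 ≤ M) (r : ℕ) (hr3 : 3 ≤ r)
    (hcard : (Finset.univ.filter (fun i => f i ≠ 0)).card ≤ r) :
    ∑ i : m, ∑ j : m, ∑ k : m, (if i ≠ j ∧ j ≠ k ∧ i ≠ k then f i * f j * f k else 0)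
      ≤ (r : ℝ) * ((r : ℝ) - 1) * ((r : ℝ) - 2) * M ^ 3 := by
  classical
  set S : Finset m := Finset.univ.filter (fun i => f i ≠ 0) with hS
  have hmem : ∀ i, i ∈ S ↔ f i ≠ 0 := by intro i; simp [hS]
  have hM3 : (0:ℝ) ≤ M ^ 3 := by positivity
  have hr3' : (3:ℝ) ≤ (r:ℝ) := by exact_mod_cast hr3
  have hr1 : (1:ℝ) ≤ (r:ℝ) := by linarith
  have hr2 : (2:ℝ) ≤ (r:ℝ) := by linarith
  have step1 : ∑ i : m, ∑ j : m, ∑ k : m,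
      (if i ≠ j ∧ j ≠ k ∧ i ≠ k then f i * f j * f k else 0)
      = ∑ i ∈ S, ∑ j ∈ S.erase i, ∑ k ∈ (S.erase i).erase j, f i * f j * f k := by
    rw [← Finset.sum_subset (Finset.subset_univ S)]
    · refine Finset.sum_congr rfl fun i hi => ?_
      rw [← Finset.sum_subset (Finset.subset_univ (S.erase i))]
      · refine Finset.sum_congr rfl fun j hj => ?_
        rw [← Finset.sum_subset (Finset.subset_univ ((S.erase i).erase j))]
        · refine Finset.sum_congr rfl fun k hk => ?_
          have h1 : j ≠ i := (Finset.mem_erase.mp hj).1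
          have h2 : k ≠ j := (Finset.mem_erase.mp hk).1
          have h3 : k ≠ i := (Finset.mem_erase.mp (Finset.mem_erase.mp hk).2).1
          rw [if_pos ⟨Ne.symm h1, Ne.symm h2, Ne.symm h3⟩]
        · intro k _ hk
          have : k = j ∨ k = i ∨ f k = 0 := by
            by_contra h; push_neg at h
            exact hk (Finset.mem_erase.mpr ⟨h.1,
              Finset.mem_erase.mpr ⟨h.2.1, (hmem k).mpr h.2.2⟩⟩)
          rcases this with h | h | h
          · subst h; simp
          · subst h; simp
          · simp [h]
      · intro j _ hj
        have : j = i ∨ f j = 0 := by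
          by_contra h; push_neg at h
          exact hj (Finset.mem_erase.mpr ⟨h.1, (hmem j).mpr h.2⟩)
        rcases this with h | h
        · subst h; simp
        · simp [h]
    · intro i _ hi
      have : f i = 0 := by by_contra h; exact hi ((hmem i).mpr h)
      simp [this]
  rw [step1]
  have bk : ∀ i ∈ S, ∀ j ∈ S.erase i,
      ∑ k ∈ (S.erase i).erase j, f i * f j * f k ≤ ((r:ℝ) - 2) * M ^ 3 := by
    intro i hi j hj
    have hc : ((S.erase i).erase j).card ≤ r - 2 := by
      have e1 := Finset.card_erase_of_mem hj
      have e2 := Finset.card_erase_of_mem hi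
      have e0 : S.card ≤ r := hcard
      omega
    calc ∑ k ∈ (S.erase i).erase j, f i * f j * f k
        ≤ ∑ _k ∈ (S.erase i).erase j, M ^ 3 := by
          refine Finset.sum_le_sum fun k _ => ?_
          have : f i * f j * f k ≤ M * M * M :=
            mul_le_mul (mul_le_mul (hM i) (hM j) (hf0 j) hM0) (hM k) (hf0 k)
              (mul_nonneg hM0 hM0)
          calc f i * f j * f k ≤ M * M * M := this
            _ = M ^ 3 := by ring
      _ = (((S.erase i).erase j).card : ℝ) * M ^ 3 := by
          rw [Finset.sum_const, nsmul_eq_mul]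
      _ ≤ ((r:ℝ) - 2) * M ^ 3 := by
          refine mul_le_mul_of_nonneg_right ?_ hM3
          calc ((((S.erase i).erase j).card : ℕ) : ℝ) ≤ ((r - 2 : ℕ) : ℝ) := by
                exact_mod_cast hc
            _ = (r:ℝ) - 2 := by
                rw [Nat.cast_sub (by omega)]; norm_num
  have bj : ∀ i ∈ S, ∑ j ∈ S.erase i, ∑ k ∈ (S.erase i).erase j, f i * f j * f k
      ≤ ((r:ℝ) - 1) * (((r:ℝ) - 2) * M ^ 3) := by
    intro i hi
    calc ∑ j ∈ S.erase i, ∑ k ∈ (S.erase i).erase j, f i * f j * f k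
        ≤ ∑ _j ∈ S.erase i, ((r:ℝ) - 2) * M ^ 3 :=
          Finset.sum_le_sum fun j hj => bk i hi j hj
      _ = ((S.erase i).card : ℝ) * (((r:ℝ) - 2) * M ^ 3) := by
          rw [Finset.sum_const, nsmul_eq_mul]
      _ ≤ ((r:ℝ) - 1) * (((r:ℝ) - 2) * M ^ 3) := by
          refine mul_le_mul_of_nonneg_right ?_ (by nlinarith)
          calc (((S.erase i).card : ℕ) : ℝ) ≤ ((r - 1 : ℕ) : ℝ) := by
                exact_mod_cast (by
                  have := Finset.card_erase_of_mem hi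
                  have e0 : S.card ≤ r := hcard
                  omega : (S.erase i).card ≤ r - 1)
            _ = (r:ℝ) - 1 := by rw [Nat.cast_sub (by omega)]; norm_num
  calc ∑ i ∈ S, ∑ j ∈ S.erase i, ∑ k ∈ (S.erase i).erase j, f i * f j * f k
      ≤ ∑ _i ∈ S, ((r:ℝ) - 1) * (((r:ℝ) - 2) * M ^ 3) :=
        Finset.sum_le_sum fun i hi => bj i hi
    _ = (S.card : ℝ) * (((r:ℝ) - 1) * (((r:ℝ) - 2) * M ^ 3)) := by
        rw [Finset.sum_const, nsmul_eq_mul]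
    _ ≤ (r:ℝ) * (((r:ℝ) - 1) * (((r:ℝ) - 2) * M ^ 3)) := by
        have h1 : ((S.card : ℕ) : ℝ) ≤ (r : ℝ) := by exact_mod_cast hcard
        exact mul_le_mul_of_nonneg_right h1
          (mul_nonneg (by linarith) (mul_nonneg (by linarith) hM3))
    _ = (r : ℝ) * ((r : ℝ) - 1) * ((r : ℝ) - 2) * M ^ 3 := by ring

variable {n : ℕ} {G : SimpleGraph (Fin n)} [DecidableRel G.Adj] {s : Fin n → Fin n → ℝ}

lemma hdeg (i : Fin n) : (G.degree i : ℝ) = ∑ j, (if G.Adj i j then (1:ℝ) else 0) := by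
  rw [SimpleGraph.degree, SimpleGraph.neighborFinset_eq_filter, Finset.card_filter]
  push_cast
  simp

lemma adj_sq (hsgn : ∀ i j, G.Adj i j → s i j = 1 ∨ s i j = -1) (i j : Fin n) :
    adjMat n G s i j ^ 2 = if G.Adj i j then 1 else 0 := by
  unfold adjMat
  split_ifs with h
  · rcases hsgn i j h with h' | h' <;> rw [h'] <;> norm_num
  · ring

lemma adj_symm (hsym : ∀ i j, s i j = s j i) (i j : Fin n) :
    adjMat n G s i j = adjMat n G s j i := by
  unfold adjMat
  by_cases h : G.Adj i j
  · rw [if_pos h, if_pos h.symm, hsym]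
  · rw [if_neg h, if_neg fun h' => h h'.symm]

lemma adj_diag (i : Fin n) : adjMat n G s i i = 0 := by
  unfold adjMat; rw [if_neg (G.irrefl)]

lemma sum_adj_sq (hsgn : ∀ i j, G.Adj i j → s i j = 1 ∨ s i j = -1) (i : Fin n) :
    ∑ j, adjMat n G s i j ^ 2 = (G.degree i : ℝ) := by
  rw [hdeg i]
  exact Finset.sum_congr rfl fun j _ => adj_sq hsgn i j

lemma lap_apply (i j : Fin n) :
    lapMat n G s i j = (if i = j then (G.degree i : ℝ) else 0) - adjMat n G s i j := by
  unfold lapMat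
  rw [Matrix.sub_apply, Matrix.diagonal_apply]

lemma trace_lap : (lapMat n G s).trace = ∑ i, (G.degree i : ℝ) := by
  unfold Matrix.trace
  refine Finset.sum_congr rfl fun i _ => ?_
  rw [Matrix.diag_apply, lap_apply, adj_diag, if_pos rfl, sub_zero]

lemma trace_lap_sq (hsym : ∀ i j, s i j = s j i)
    (hsgn : ∀ i j, G.Adj i j → s i j = 1 ∨ s i j = -1) :
    (lapMat n G s ^ 2).trace = ∑ i, (G.degree i : ℝ) ^ 2 + ∑ i, (G.degree i : ℝ) := by
  have h1 : (lapMat n G s ^ 2).trace = ∑ i, ∑ j, lapMat n G s i j * lapMat n G s j i := by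
    rw [pow_two]
    simp [Matrix.trace, Matrix.diag, Matrix.mul_apply]
  rw [h1, ← Finset.sum_add_distrib]
  refine Finset.sum_congr rfl fun i _ => ?_
  have h2 : ∀ j, lapMat n G s i j * lapMat n G s j i
      = (if i = j then (G.degree i : ℝ) ^ 2 else 0) + adjMat n G s i j ^ 2 := by
    intro j
    rw [lap_apply, lap_apply]
    by_cases h : i = j
    · subst h
      rw [if_pos rfl, if_pos rfl, adj_diag]
      ring
    · rw [if_neg h, if_neg (Ne.symm h), if_neg h, adj_symm hsym]
      ring
  simp only [h2]
  rw [Finset.sum_add_distrib, Finset.sum_ite_eq, if_pos (Finset.mem_univ i),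
    sum_adj_sq hsgn]


lemma tr_diag_mul (f : Fin n → ℝ) (B : Matrix (Fin n) (Fin n) ℝ) :
    (Matrix.diagonal f * B).trace = ∑ i, f i * B i i := by
  simp [Matrix.trace, Matrix.diag, Matrix.mul_apply, Matrix.diagonal_apply, ite_mul, zero_mul,
    Finset.sum_ite_eq]

lemma trace_adj_cube (hsgn : ∀ i j, G.Adj i j → s i j = 1 ∨ s i j = -1) :
    (adjMat n G s * adjMat n G s * adjMat n G s).trace = 6 * tPM n G s := by
  have h : (adjMat n G s * adjMat n G s * adjMat n G s).trace
      = ∑ i, ∑ j, ∑ k, adjMat n G s i j * adjMat n G s j k * adjMat n G s k i := by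
    simp only [Matrix.trace, Matrix.diag, Matrix.mul_apply, Finset.sum_mul]
    exact Finset.sum_congr rfl fun i _ => Finset.sum_comm
  rw [h]
  have hpt : ∀ i j k : Fin n, adjMat n G s i j * adjMat n G s j k * adjMat n G s k i
      = if G.Adj i j ∧ G.Adj j k ∧ G.Adj k i then s i j * s j k * s k i else 0 := by
    intro i j k
    unfold adjMat
    by_cases h1 : G.Adj i j <;> by_cases h2 : G.Adj j k <;> by_cases h3 : G.Adj k i <;>
      simp [h1, h2, h3]
  simp only [hpt]
  unfold tPM
  ring

lemma trace_lap_cube (hsym : ∀ i j, s i j = s j i)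
    (hsgn : ∀ i j, G.Adj i j → s i j = 1 ∨ s i j = -1) :
    (lapMat n G s ^ 3).trace = ∑ i, (G.degree i : ℝ) ^ 3 + 3 * ∑ i, (G.degree i : ℝ) ^ 2
      - 6 * tPM n G s := by
  set D := Matrix.diagonal (fun i : Fin n => (G.degree i : ℝ)) with hD
  set A := adjMat n G s with hA
  have hLDA : lapMat n G s = D - A := rfl
  have hexp : lapMat n G s ^ 3
      = D*D*D - D*D*A - (D*A*D) - (A*(D*D)) + D*(A*A) + A*(D*A) + A*A*D - A*A*A := by
    rw [hLDA]; noncomm_ring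
  have hAsq : ∀ i, (A * A) i i = (G.degree i : ℝ) := by
    intro i
    rw [Matrix.mul_apply, ← sum_adj_sq hsgn i]
    exact Finset.sum_congr rfl fun j _ => by
      rw [sq, hA]
      exact congrArg _ (adj_symm hsym j i)
  have t1 : (D*D*D).trace = ∑ i, (G.degree i : ℝ) ^ 3 := by
    rw [hD, Matrix.diagonal_mul_diagonal, Matrix.diagonal_mul_diagonal, Matrix.trace_diagonal]
    exact Finset.sum_congr rfl fun i _ => by ring
  have t2 : (D*D*A).trace = 0 := by
    rw [hD, Matrix.diagonal_mul_diagonal, tr_diag_mul]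
    refine Finset.sum_eq_zero fun i _ => ?_
    rw [hA, adj_diag, mul_zero]
  have t3 : (D*A*D).trace = 0 := by
    rw [Matrix.trace_mul_cycle]
    exact t2
  have t4 : (A*(D*D)).trace = 0 := by
    rw [Matrix.trace_mul_comm]
    exact t2
  have t5 : (D*(A*A)).trace = ∑ i, (G.degree i : ℝ) ^ 2 := by
    rw [hD, tr_diag_mul]
    exact Finset.sum_congr rfl fun i _ => by rw [hAsq i]; ring
  have t6 : (A*(D*A)).trace = ∑ i, (G.degree i : ℝ) ^ 2 := by
    rw [Matrix.trace_mul_comm, Matrix.mul_assoc]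
    exact t5
  have t7 : (A*A*D).trace = ∑ i, (G.degree i : ℝ) ^ 2 := by
    rw [Matrix.trace_mul_comm]
    exact t5
  have t8 : (A*A*A).trace = 6 * tPM n G s := trace_adj_cube hsgn
  rw [hexp]
  simp only [Matrix.trace_sub, Matrix.trace_add]
  rw [t1, t2, t3, t4, t5, t6, t7, t8]
  ring

lemma mulVec_lap (x : Fin n → ℝ) (i : Fin n) :
    (lapMat n G s *ᵥ x) i = (G.degree i : ℝ) * x i - ∑ j, adjMat n G s i j * x j := by
  simp only [Matrix.mulVec, dotProduct, lap_apply, sub_mul, Finset.sum_sub_distrib,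
    ite_mul, zero_mul, Finset.sum_ite_eq, Finset.mem_univ, if_true]

lemma quad_form (hsgn : ∀ i j, G.Adj i j → s i j = 1 ∨ s i j = -1) (x : Fin n → ℝ) :
    x ⬝ᵥ (lapMat n G s *ᵥ x)
    = (∑ i, ∑ j, (if G.Adj i j then (x i - s i j * x j) ^ 2 else 0)) / 2 := by
  have hlhs : x ⬝ᵥ (lapMat n G s *ᵥ x)
      = ∑ i, (G.degree i : ℝ) * x i ^ 2 - ∑ i, ∑ j, adjMat n G s i j * x i * x j := by
    simp only [dotProduct, mulVec_lap]
    rw [← Finset.sum_sub_distrib]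
    refine Finset.sum_congr rfl fun i _ => ?_
    rw [mul_sub, Finset.mul_sum]
    congr 1
    · ring
    · exact Finset.sum_congr rfl fun j _ => by ring
  have hpt : ∀ i j, (if G.Adj i j then (x i - s i j * x j) ^ 2 else 0)
      = (if G.Adj i j then (1:ℝ) else 0) * x i ^ 2 + (if G.Adj i j then (1:ℝ) else 0) * x j ^ 2
        - 2 * (adjMat n G s i j * x i * x j) := by
    intro i j
    by_cases h : G.Adj i j
    · simp only [if_pos h, adjMat, one_mul]
      rcases hsgn i j h with h' | h' <;> rw [h'] <;> ring
    · simp only [if_neg h, adjMat]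
      simp [h]
  have hS1 : ∑ i, ∑ j, (if G.Adj i j then (1:ℝ) else 0) * x i ^ 2
      = ∑ i, (G.degree i : ℝ) * x i ^ 2 := by
    refine Finset.sum_congr rfl fun i _ => ?_
    rw [← Finset.sum_mul, ← hdeg]
  have hS2 : ∑ i, ∑ j, (if G.Adj i j then (1:ℝ) else 0) * x j ^ 2
      = ∑ j, (G.degree j : ℝ) * x j ^ 2 := by
    rw [Finset.sum_comm]
    refine Finset.sum_congr rfl fun j _ => ?_
    rw [← Finset.sum_mul]
    have : (∑ i, if G.Adj i j then (1:ℝ) else 0) = (G.degree j : ℝ) := by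
      rw [hdeg]
      exact Finset.sum_congr rfl fun i _ => by simp only [G.adj_comm i j]
    rw [this]
  have hbig : ∑ i, ∑ j, (if G.Adj i j then (x i - s i j * x j) ^ 2 else 0)
      = 2 * (∑ i, (G.degree i : ℝ) * x i ^ 2 - ∑ i, ∑ j, adjMat n G s i j * x i * x j) := by
    simp only [hpt]
    simp only [Finset.sum_add_distrib, Finset.sum_sub_distrib]
    rw [hS1, hS2]
    have : ∑ i, ∑ j, 2 * (adjMat n G s i j * x i * x j)
        = 2 * ∑ i, ∑ j, adjMat n G s i j * x i * x j := by
      rw [Finset.mul_sum]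
      exact Finset.sum_congr rfl fun i _ => by rw [Finset.mul_sum]
    rw [this]
    ring
  rw [hlhs, hbig]
  ring

def numBalanced' (n : ℕ) (G : SimpleGraph (Fin n)) (s : Fin n → Fin n → ℝ) : ℕ :=
  Nat.card {c : G.ConnectedComponent //
    ∃ θ : Fin n → ℝ, (∀ v, θ v = 1 ∨ θ v = -1) ∧
      ∀ i j, G.Adj i j → G.connectedComponentMk i = c → s i j = θ i * θ j}

lemma card_nonzero_le (hsym : ∀ i j, s i j = s j i)
    (hsgn : ∀ i j, G.Adj i j → s i j = 1 ∨ s i j = -1)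
    (hL : (lapMat n G s).IsHermitian) :
    Fintype.card {i // hL.eigenvalues i ≠ 0} + numBalanced' n G s ≤ n := by
  classical
  rw [← Matrix.IsHermitian.rank_eq_card_non_zero_eigs]
  have hrn : (lapMat n G s).rank
      + Module.finrank ℝ (LinearMap.ker (lapMat n G s).mulVecLin) = n := by
    rw [Matrix.rank, LinearMap.finrank_range_add_finrank_ker,
      Module.finrank_fintype_fun_eq_card, Fintype.card_fin]
  suffices hbk : numBalanced' n G s
      ≤ Module.finrank ℝ (LinearMap.ker (lapMat n G s).mulVecLin) by omega
  set T := {c : G.ConnectedComponent //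
    ∃ θ : Fin n → ℝ, (∀ v, θ v = 1 ∨ θ v = -1) ∧
      ∀ i j, G.Adj i j → G.connectedComponentMk i = c → s i j = θ i * θ j} with hT
  have : numBalanced' n G s = Fintype.card T := by
    rw [numBalanced', Nat.card_eq_fintype_card]
  rw [this]
  set θf : T → Fin n → ℝ := fun c => Classical.choose c.2 with hθf
  have hθ1 : ∀ c : T, ∀ v, θf c v = 1 ∨ θf c v = -1 :=
    fun c => (Classical.choose_spec c.2).1
  have hθ2 : ∀ c : T, ∀ i j, G.Adj i j → G.connectedComponentMk i = c.1 →
      s i j = θf c i * θf c j := fun c => (Classical.choose_spec c.2).2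
  set v : T → Fin n → ℝ :=
    fun c w => if G.connectedComponentMk w = c.1 then θf c w else 0 with hv
  have hker : ∀ c : T, (lapMat n G s).mulVecLin (v c) = 0 := by
    intro c
    rw [Matrix.mulVecLin_apply]
    funext i
    rw [Pi.zero_apply, mulVec_lap]
    by_cases hc : G.connectedComponentMk i = c.1
    · have hvi : v c i = θf c i := by rw [hv]; simp [hc]
      have hterm : ∀ j, adjMat n G s i j * v c j
          = (if G.Adj i j then (1:ℝ) else 0) * θf c i := by
        intro j
        by_cases hj : G.Adj i j
        · have hmkj : G.connectedComponentMk j = c.1 := by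
            rw [← hc]
            exact SimpleGraph.ConnectedComponent.sound hj.symm.reachable
          have hvj : v c j = θf c j := by rw [hv]; simp [hmkj]
          rw [hvj]
          simp only [adjMat, if_pos hj, one_mul]
          rw [hθ2 c i j hj hc]
          rcases hθ1 c j with h | h <;> rw [h] <;> ring
        · simp [adjMat, hj]
      rw [hvi, Finset.sum_congr rfl fun j _ => hterm j, ← Finset.sum_mul, ← hdeg]
      ring
    · have hvi : v c i = 0 := by rw [hv]; simp [hc]
      have hterm : ∀ j, adjMat n G s i j * v c j = 0 := by
        intro j
        by_cases hj : G.Adj i j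
        · have : G.connectedComponentMk j ≠ c.1 := by
            intro h
            exact hc (by rw [← h]; exact SimpleGraph.ConnectedComponent.sound hj.reachable)
          have : v c j = 0 := by rw [hv]; simp [this]
          rw [this, mul_zero]
        · simp [adjMat, hj]
      rw [hvi, Finset.sum_congr rfl fun j _ => hterm j]
      simp
  have hli : LinearIndependent ℝ v := by
    rw [Fintype.linearIndependent_iff]
    intro g hsum c
    obtain ⟨w, hw⟩ := c.1.exists_rep
    have hw' : G.connectedComponentMk w = c.1 := hw
    have hev := congrFun hsum w
    rw [Finset.sum_apply] at hev
    simp only [Pi.smul_apply, smul_eq_mul, Pi.zero_apply] at hev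
    have hterm : ∀ c' : T, g c' * v c' w = if c' = c then g c' * θf c' w else 0 := by
      intro c'
      by_cases hcc : c' = c
      · subst hcc
        rw [if_pos rfl, hv]
        simp [hw']
      · rw [if_neg hcc, hv]
        have : G.connectedComponentMk w ≠ c'.1 := by
          rw [hw']
          exact fun h => hcc (Subtype.ext h.symm)
        simp [this]
    rw [Finset.sum_congr rfl fun c' _ => hterm c', Finset.sum_ite_eq' Finset.univ c
      (fun c' => g c' * θf c' w), if_pos (Finset.mem_univ c)] at hev
    rcases hθ1 c w with h | h <;> rw [h] at hev <;> simpa using hev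
  have hu : LinearIndependent ℝ
      (fun c : T => (⟨v c, LinearMap.mem_ker.mpr (hker c)⟩ :
        LinearMap.ker (lapMat n G s).mulVecLin)) := by
    apply LinearIndependent.of_comp (LinearMap.ker (lapMat n G s).mulVecLin).subtype
    exact hli
  exact hu.fintype_card_le_finrank


/-- λ_max(L(Σ)) ≥ (|2s₃+6s₂−3s₂s₁+s₁³−3s₁²−12t^±|/((n−b)(n−b−1)(n−b−2)))^{1/3} when b ≤ n−3. -/
theorem stmt11 (n : ℕ) (G : SimpleGraph (Fin n)) [DecidableRel G.Adj]
    (s : Fin n → Fin n → ℝ) (hsym : ∀ i j, s i j = s j i)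
    (hsgn : ∀ i j, G.Adj i j → s i j = 1 ∨ s i j = -1)
    (hb : numBalanced n G s + 3 ≤ n)
    (hL : (lapMat n G s).IsHermitian) :
    (|2 * ∑ j, (G.degree j : ℝ) ^ 3 + 6 * ∑ j, (G.degree j : ℝ) ^ 2 -
        3 * (∑ j, (G.degree j : ℝ) ^ 2) * (∑ j, (G.degree j : ℝ)) +
        (∑ j, (G.degree j : ℝ)) ^ 3 - 3 * (∑ j, (G.degree j : ℝ)) ^ 2 -
        12 * tPM n G s| /
      (((n : ℝ) - numBalanced n G s) * ((n : ℝ) - numBalanced n G s - 1) *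
        ((n : ℝ) - numBalanced n G s - 2))) ^ ((1 : ℝ) / 3) ≤
      ⨆ i, hL.eigenvalues i := by
  classical
  set lam := hL.eigenvalues with hlamdef
  set M := ⨆ i, hL.eigenvalues i with hMdef
  set b := numBalanced n G s with hbdef
  have hn3 : 3 ≤ n := by omega
  have hne : Nonempty (Fin n) := ⟨⟨0, by omega⟩⟩
  have hpsd : (lapMat n G s).PosSemidef := by
    refine Matrix.PosSemidef.of_dotProduct_mulVec_nonneg hL fun x => ?_
    rw [star_trivial, quad_form hsgn x]
    apply div_nonneg _ (by norm_num)
    refine Finset.sum_nonneg fun i _ => Finset.sum_nonneg fun j _ => ?_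
    split_ifs
    · positivity
    · exact le_refl 0
  have hlam0 : ∀ i, 0 ≤ lam i := fun i => hpsd.eigenvalues_nonneg i
  have hbdd : BddAbove (Set.range lam) := Set.Finite.bddAbove (Set.finite_range lam)
  have hMle : ∀ i, lam i ≤ M := fun i => le_ciSup hbdd i
  have hM0 : 0 ≤ M := le_trans (hlam0 (Classical.arbitrary _)) (hMle _)
  have e1 : ∑ i, lam i = ∑ j, (G.degree j : ℝ) := by
    have h := trace_pow_eq hL 1
    simp only [pow_one] at h
    rw [trace_lap] at h
    exact h.symm
  have e2 : ∑ i, lam i ^ 2 = ∑ j, (G.degree j : ℝ) ^ 2 + ∑ j, (G.degree j : ℝ) := by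
    have h := trace_pow_eq hL 2
    rw [trace_lap_sq hsym hsgn] at h
    exact h.symm
  have e3 : ∑ i, lam i ^ 3
      = ∑ j, (G.degree j : ℝ) ^ 3 + 3 * ∑ j, (G.degree j : ℝ) ^ 2 - 6 * tPM n G s := by
    have h := trace_pow_eq hL 3
    rw [trace_lap_cube hsym hsgn] at h
    exact h.symm
  have hexpr : 2 * ∑ j, (G.degree j : ℝ) ^ 3 + 6 * ∑ j, (G.degree j : ℝ) ^ 2 -
        3 * (∑ j, (G.degree j : ℝ) ^ 2) * (∑ j, (G.degree j : ℝ)) +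
        (∑ j, (G.degree j : ℝ)) ^ 3 - 3 * (∑ j, (G.degree j : ℝ)) ^ 2 -
        12 * tPM n G s
      = (∑ i, lam i) ^ 3 - 3 * (∑ i, lam i ^ 2) * (∑ i, lam i) + 2 * ∑ i, lam i ^ 3 := by
    rw [e1, e2, e3]; ring
  have hid := triple_sum_identity lam
  have hTnn : (0:ℝ) ≤ ∑ i, ∑ j, ∑ k,
      (if i ≠ j ∧ j ≠ k ∧ i ≠ k then lam i * lam j * lam k else 0) := by
    refine Finset.sum_nonneg fun i _ => Finset.sum_nonneg fun j _ =>
      Finset.sum_nonneg fun k _ => ?_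
    split_ifs
    · exact mul_nonneg (mul_nonneg (hlam0 i) (hlam0 j)) (hlam0 k)
    · exact le_refl 0
  have habs : |2 * ∑ j, (G.degree j : ℝ) ^ 3 + 6 * ∑ j, (G.degree j : ℝ) ^ 2 -
        3 * (∑ j, (G.degree j : ℝ) ^ 2) * (∑ j, (G.degree j : ℝ)) +
        (∑ j, (G.degree j : ℝ)) ^ 3 - 3 * (∑ j, (G.degree j : ℝ)) ^ 2 -
        12 * tPM n G s|
      = ∑ i, ∑ j, ∑ k,
        (if i ≠ j ∧ j ≠ k ∧ i ≠ k then lam i * lam j * lam k else 0) := by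
    rw [hexpr, ← hid]
    exact abs_of_nonneg hTnn
  set r := n - b with hrdef
  have hr3 : 3 ≤ r := by omega
  have hcard : (Finset.univ.filter (fun i => lam i ≠ 0)).card ≤ r := by
    have h := card_nonzero_le hsym hsgn hL
    have h2 : Fintype.card {i // lam i ≠ 0}
        = (Finset.univ.filter (fun i => lam i ≠ 0)).card := Fintype.card_subtype _
    have h3 : numBalanced' n G s = b := rfl
    have h4 : Fintype.card {i // hL.eigenvalues i ≠ 0} = Fintype.card {i // lam i ≠ 0} := rfl
    omega
  have hbound := triple_sum_bound lam hlam0 M hMle hM0 r hr3 hcard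
  have hbn : b ≤ n := by omega
  have hc1 : ((n : ℝ) - (b:ℝ)) = (r : ℝ) := by
    rw [hrdef, Nat.cast_sub hbn]
  rw [hc1]
  have hr3' : (3:ℝ) ≤ (r:ℝ) := by exact_mod_cast hr3
  have hden : (0:ℝ) < (r:ℝ) * ((r:ℝ) - 1) * ((r:ℝ) - 2) :=
    mul_pos (mul_pos (by linarith) (by linarith)) (by linarith)
  have hdiv : |2 * ∑ j, (G.degree j : ℝ) ^ 3 + 6 * ∑ j, (G.degree j : ℝ) ^ 2 -
        3 * (∑ j, (G.degree j : ℝ) ^ 2) * (∑ j, (G.degree j : ℝ)) +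
        (∑ j, (G.degree j : ℝ)) ^ 3 - 3 * (∑ j, (G.degree j : ℝ)) ^ 2 -
        12 * tPM n G s| / ((r:ℝ) * ((r:ℝ) - 1) * ((r:ℝ) - 2)) ≤ M ^ 3 := by
    rw [div_le_iff₀ hden, habs]
    calc ∑ i, ∑ j, ∑ k, (if i ≠ j ∧ j ≠ k ∧ i ≠ k then lam i * lam j * lam k else 0)
        ≤ (r:ℝ) * ((r:ℝ) - 1) * ((r:ℝ) - 2) * M ^ 3 := hbound
      _ = M ^ 3 * ((r:ℝ) * ((r:ℝ) - 1) * ((r:ℝ) - 2)) := by ring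
  calc (|2 * ∑ j, (G.degree j : ℝ) ^ 3 + 6 * ∑ j, (G.degree j : ℝ) ^ 2 -
        3 * (∑ j, (G.degree j : ℝ) ^ 2) * (∑ j, (G.degree j : ℝ)) +
        (∑ j, (G.degree j : ℝ)) ^ 3 - 3 * (∑ j, (G.degree j : ℝ)) ^ 2 -
        12 * tPM n G s| / ((r:ℝ) * ((r:ℝ) - 1) * ((r:ℝ) - 2))) ^ ((1:ℝ)/3)
      ≤ (M ^ 3) ^ ((1:ℝ)/3) := by
        apply Real.rpow_le_rpow (by positivity) hdiv (by norm_num)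
    _ = M := by
        rw [← Real.rpow_natCast M 3, ← Real.rpow_mul hM0]
        norm_num

end
end

section
/- For a connected graph Γ on n ≥ 2 vertices with m edges, λ_max(L(Γ)) ≤ s_1/(n−1) + √((s_1+s_2) − (s_1+s_2+s_1²)/(n−1) + (s_1/(n−1))²), where s_1 = ∑_j d_j = 2m and s_2 = ∑_j d_j². -/
open Matrix BigOperators

noncomputable section

/-- 0/1 adjacency matrix of a simple graph. -/
def adjMatU (n : ℕ) (G : SimpleGraph (Fin n)) [DecidableRel G.Adj] :
    Matrix (Fin n) (Fin n) ℝ :=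
  fun i j => if G.Adj i j then 1 else 0

/-- Laplacian L(Γ) = D - A. -/
def lapMatU (n : ℕ) (G : SimpleGraph (Fin n)) [DecidableRel G.Adj] :
    Matrix (Fin n) (Fin n) ℝ :=
  Matrix.diagonal (fun i => (G.degree i : ℝ)) - adjMatU n G

/-- Signless Laplacian Q(Γ) = D + A. -/
def signlessLap (n : ℕ) (G : SimpleGraph (Fin n)) [DecidableRel G.Adj] :
    Matrix (Fin n) (Fin n) ℝ :=
  Matrix.diagonal (fun i => (G.degree i : ℝ)) + adjMatU n G

/-- Sum of `f i j` over the edges of the graph (each unordered edge counted once). -/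
def edgeSumU (n : ℕ) (G : SimpleGraph (Fin n)) [DecidableRel G.Adj]
    (f : Fin n → Fin n → ℝ) : ℝ :=
  (∑ i, ∑ j, if G.Adj i j then f i j else 0) / 2
section helpers

lemma centered_bound {ι : Type*} [DecidableEq ι] (s : Finset ι) (y : ι → ℝ) {j : ι}
    (hj : j ∈ s) (hsum : ∑ i ∈ s, y i = 0) :
    (s.card : ℝ) * (y j) ^ 2 ≤ ((s.card : ℝ) - 1) * ∑ i ∈ s, (y i) ^ 2 := by
  have hcs := sq_sum_le_card_mul_sum_sq (s := s.erase j) (f := y)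
  have h1 : ∑ i ∈ s.erase j, y i = - y j := by
    have h := Finset.add_sum_erase s y hj
    linarith [h, hsum]
  have h2 : ∑ i ∈ s.erase j, (y i) ^ 2 = (∑ i ∈ s, (y i) ^ 2) - (y j) ^ 2 := by
    have h := Finset.add_sum_erase s (fun i => (y i) ^ 2) hj
    linarith
  have hc : ((s.erase j).card : ℝ) = (s.card : ℝ) - 1 := by
    rw [Finset.card_erase_of_mem hj, Nat.cast_sub (Finset.card_pos.mpr ⟨j, hj⟩)]
    simp
  rw [h1, h2, hc] at hcs
  have hc1 : (1:ℝ) ≤ (s.card : ℝ) := by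
    exact_mod_cast Finset.card_pos.mpr ⟨j, hj⟩
  nlinarith [sq_nonneg (y j)]

lemma herm_sum_eig {m : ℕ} (A : Matrix (Fin m) (Fin m) ℝ) (hA : A.IsHermitian) :
    ∑ i, hA.eigenvalues i = A.trace := by
  have h := hA.spectral_theorem
  rw [Unitary.conjStarAlgAut_apply] at h
  have : A.trace = (Matrix.diagonal (RCLike.ofReal ∘ hA.eigenvalues) :
      Matrix (Fin m) (Fin m) ℝ).trace := by
    conv_lhs => rw [h]
    have hsU : star (hA.eigenvectorUnitary : Matrix (Fin m) (Fin m) ℝ) * (hA.eigenvectorUnitary : Matrix (Fin m) (Fin m) ℝ) = 1 := (Unitary.mem_iff.mp hA.eigenvectorUnitary.2).1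
    rw [Matrix.trace_mul_cycle, hsU, Matrix.one_mul]
  rw [this, Matrix.trace_diagonal]
  simp

lemma herm_sum_eig_sq {m : ℕ} (A : Matrix (Fin m) (Fin m) ℝ) (hA : A.IsHermitian) :
    ∑ i, (hA.eigenvalues i) ^ 2 = (A * A).trace := by
  have h := hA.spectral_theorem
  rw [Unitary.conjStarAlgAut_apply] at h
  set U := (hA.eigenvectorUnitary : Matrix (Fin m) (Fin m) ℝ)
  set D := (Matrix.diagonal (RCLike.ofReal ∘ hA.eigenvalues) : Matrix (Fin m) (Fin m) ℝ) with hD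
  have hsU : star U * U = 1 := (Unitary.mem_iff.mp hA.eigenvectorUnitary.2).1
  have hAA : A * A = U * (D * D) * star U := by
    conv_lhs => rw [h]
    calc (U * D * star U) * (U * D * star U)
        = U * D * (star U * U) * D * star U := by noncomm_ring
      _ = U * (D * D) * star U := by rw [hsU]; noncomm_ring
  rw [hAA, Matrix.trace_mul_cycle, hsU,
    Matrix.one_mul, hD, Matrix.diagonal_mul_diagonal, Matrix.trace_diagonal]
  simp [sq]

end helpers

section lems
variable (n : ℕ) (G : SimpleGraph (Fin n)) [DecidableRel G.Adj]


lemma degree_row (i : Fin n) :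
    ∑ j, (if G.Adj i j then (1:ℝ) else 0) = (G.degree i : ℝ) := by
  rw [Finset.sum_boole, SimpleGraph.degree, SimpleGraph.neighborFinset_eq_filter]

lemma lap_trace : (lapMatU n G).trace = ∑ j, (G.degree j : ℝ) := by
  simp [Matrix.trace, Matrix.diag, lapMatU, adjMatU, SimpleGraph.irrefl]

lemma lap_entry_sq (i j : Fin n) :
    lapMatU n G i j * lapMatU n G j i =
      (if i = j then (G.degree i : ℝ)^2 else 0) + (if G.Adj i j then 1 else 0) := by
  rcases eq_or_ne i j with rfl | hne
  · simp [lapMatU, adjMatU, SimpleGraph.irrefl, sq]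
  · simp only [lapMatU, adjMatU, Matrix.sub_apply, Matrix.diagonal_apply_ne _ hne,
      Matrix.diagonal_apply_ne _ hne.symm, if_neg hne]
    by_cases hadj : G.Adj i j
    · simp [hadj, G.adj_symm hadj]
    · simp [hadj, fun h => hadj (G.adj_symm h)]

lemma lap_trace_sq : (lapMatU n G * lapMatU n G).trace =
    ∑ j, (G.degree j : ℝ) + ∑ j, (G.degree j : ℝ)^2 := by
  have : (lapMatU n G * lapMatU n G).trace = ∑ i, ∑ j, lapMatU n G i j * lapMatU n G j i := by
    simp [Matrix.trace, Matrix.diag, Matrix.mul_apply]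
  rw [this]
  have h1 : ∀ i : Fin n, ∑ j, lapMatU n G i j * lapMatU n G j i =
      (G.degree i : ℝ)^2 + (G.degree i : ℝ) := by
    intro i
    simp only [lap_entry_sq n G i]
    rw [Finset.sum_add_distrib, degree_row n G i, Finset.sum_ite_eq (Finset.univ) i
      (fun _ => (G.degree i : ℝ)^2)]
    simp
  rw [Finset.sum_congr rfl (fun i _ => h1 i), Finset.sum_add_distrib]
  ring

lemma lap_mulVec_one (hn : 1 ≤ n) : lapMatU n G *ᵥ (fun _ => (1:ℝ)) = 0 := by
  funext i
  simp only [Matrix.mulVec, dotProduct, mul_one, lapMatU, adjMatU, Matrix.sub_apply]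
  rw [Finset.sum_sub_distrib, degree_row n G i]
  simp [Matrix.diagonal_apply, Finset.sum_ite_eq]

lemma lap_exists_zero_eig (hn : 2 ≤ n) (hL : (lapMatU n G).IsHermitian) :
    ∃ i, hL.eigenvalues i = 0 := by
  have hv : (fun _ => (1:ℝ)) ≠ (0 : Fin n → ℝ) := by
    intro h
    have := congrFun h ⟨0, by omega⟩
    simpa using this
  have hdet : (lapMatU n G).det = 0 := by
    rw [← Matrix.exists_mulVec_eq_zero_iff]
    exact ⟨_, hv, lap_mulVec_one n G (by omega)⟩
  have hprod := hL.det_eq_prod_eigenvalues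
  rw [hdet] at hprod
  simp only [RCLike.ofReal_real_eq_id, id] at hprod
  obtain ⟨i, _, hi⟩ := Finset.prod_eq_zero_iff.mp hprod.symm
  exact ⟨i, hi⟩


end lems

/-- For a connected graph, λ_max(L(Γ)) ≤ s₁/(n−1) + √((s₁+s₂) − (s₁+s₂+s₁²)/(n−1) + (s₁/(n−1))²). -/
theorem stmt18 (n : ℕ) (hn : 2 ≤ n) (G : SimpleGraph (Fin n)) [DecidableRel G.Adj]
    (hconn : G.Connected) (hL : (lapMatU n G).IsHermitian) :
    (⨆ i, hL.eigenvalues i) ≤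
      (∑ j, (G.degree j : ℝ)) / ((n : ℝ) - 1) +
      Real.sqrt ((∑ j, (G.degree j : ℝ) + ∑ j, (G.degree j : ℝ) ^ 2) -
        (∑ j, (G.degree j : ℝ) + ∑ j, (G.degree j : ℝ) ^ 2 + (∑ j, (G.degree j : ℝ)) ^ 2) /
          ((n : ℝ) - 1) +
        ((∑ j, (G.degree j : ℝ)) / ((n : ℝ) - 1)) ^ 2) := by
  haveI : Nonempty (Fin n) := ⟨⟨0, by omega⟩⟩
  set e := hL.eigenvalues with he
  set S := ∑ j, (G.degree j : ℝ) with hS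
  set Q := ∑ j, (G.degree j : ℝ) ^ 2 with hQ
  set k : ℝ := (n : ℝ) - 1 with hkdef
  have hk1 : (1:ℝ) ≤ k := by
    have : (2:ℝ) ≤ (n:ℝ) := by exact_mod_cast hn
    simp only [hkdef]; linarith
  have hkpos : (0:ℝ) < k := by linarith
  have hk0 : k ≠ 0 := ne_of_gt hkpos
  set μ : ℝ := S / k with hμ
  set arg : ℝ := (S + Q) - (S + Q + S^2)/k + μ^2 with harg
  have hS0 : (0:ℝ) ≤ S := Finset.sum_nonneg (fun j _ => by positivity)
  have hμ0 : (0:ℝ) ≤ μ := div_nonneg hS0 (le_of_lt hkpos)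
  -- eigenvalue sums
  have hsE : ∑ i, e i = S := by rw [he, herm_sum_eig _ hL, lap_trace]
  have hsE2 : ∑ i, (e i)^2 = S + Q := by rw [he, herm_sum_eig_sq _ hL, lap_trace_sq]
  obtain ⟨i0, hi0⟩ := lap_exists_zero_eig n G hn hL
  rw [← he] at hi0
  obtain ⟨imax, hmax⟩ := exists_eq_ciSup_of_finite (f := e)
  rw [← hmax]
  rcases eq_or_ne imax i0 with rfl | hne
  · rw [hi0]
    have := Real.sqrt_nonneg arg
    linarith
  · -- imax in the erased set
    set s : Finset (Fin n) := Finset.univ.erase i0 with hs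
    have hjmem : imax ∈ s := Finset.mem_erase.mpr ⟨hne, Finset.mem_univ _⟩
    have hcard : ((s.card : ℝ)) = k := by
      rw [hs, Finset.card_erase_of_mem (Finset.mem_univ _), Finset.card_univ,
        Fintype.card_fin, Nat.cast_sub (by omega)]
      simp [hkdef]
    have hse : ∑ i ∈ s, e i = S := by
      rw [hs, Finset.sum_erase_eq_sub (Finset.mem_univ i0), hi0, hsE]; ring
    have hse2 : ∑ i ∈ s, (e i)^2 = S + Q := by
      rw [hs, Finset.sum_erase_eq_sub (Finset.mem_univ i0), hi0, hsE2]; ring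
    have hsum0 : ∑ i ∈ s, (e i - μ) = 0 := by
      rw [Finset.sum_sub_distrib, hse, Finset.sum_const, nsmul_eq_mul, hcard, hμ]
      field_simp
      ring
    have hcb := centered_bound s (fun i => e i - μ) hjmem hsum0
    rw [hcard] at hcb
    have hsumsq : ∑ i ∈ s, (e i - μ)^2 = (S + Q) - 2*μ*S + k*μ^2 := by
      calc ∑ i ∈ s, (e i - μ)^2
          = ∑ i ∈ s, ((e i)^2 - 2*μ*(e i) + μ^2) := Finset.sum_congr rfl (fun i _ => by ring)
        _ = (∑ i ∈ s, (e i)^2) - 2*μ*(∑ i ∈ s, e i) + (s.card : ℝ)*μ^2 := by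
            rw [Finset.sum_add_distrib, Finset.sum_sub_distrib, ← Finset.mul_sum,
              Finset.sum_const, nsmul_eq_mul]
        _ = (S + Q) - 2*μ*S + k*μ^2 := by rw [hse2, hse, hcard]
    rw [hsumsq] at hcb
    have hargk : k * arg = (k - 1) * ((S + Q) - 2*μ*S + k*μ^2) := by
      rw [harg, hμ]; field_simp; ring
    have hsq : (e imax - μ)^2 ≤ arg := by
      have h3 : k * (e imax - μ)^2 ≤ k * arg := by rw [hargk]; exact hcb
      exact le_of_mul_le_mul_left h3 hkpos
    have h1 : e imax - μ ≤ Real.sqrt arg := by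
      have h2 := Real.sqrt_le_sqrt hsq
      rw [Real.sqrt_sq_eq_abs] at h2
      linarith [le_abs_self (e imax - μ)]
    linarith
end
end
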